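/- (Theorem II.2(i), spectral form.) Assume (H0) and d₁, d₂, l > 0, and assume hypothesis (H1) holds at every mode: for every natural number k, either (−A_k² + 2·B_k + b₁₁² < 0 and B_k − C_k > 0) or (A_k² − 2·B_k − b₁₁²)² < 4·(B_k² − C_k²). Then for every natural number k, every real τ ≥ 0 and every λ ∈ ℂ satisfying the characteristic equation λ² + A_k·λ + B_k + (−b₁₁·λ + C_k)·exp(−λτ) = 0, one has Re λ < 0. -/

import Mathlib

open Real

/-- Δ = M² − 4·K·(a·m + c·p)·(a·r₂ + c·d − c·r₀) with M = a·m + c·p + K·(a·r₂ + c·d). -/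
noncomputable def Delta (r₀ r₂ K d a p c m : ℝ) : ℝ :=
  (a*m + c*p + K*(a*r₂ + c*d))^2 - 4*K*(a*m + c*p)*(a*r₂ + c*d - c*r₀)

/-- The positive equilibrium predator density v⋆. -/
noncomputable def vstar (r₀ r₂ K d a p c m : ℝ) : ℝ :=
  (-(a*m + c*p + K*(a*r₂ + c*d)) + Real.sqrt (Delta r₀ r₂ K d a p c m)) / (2*K*(a*m + c*p))

/-- The positive equilibrium prey density u⋆ = (r₂ + m·v⋆)/c. -/
noncomputable def ustar (r₀ r₂ K d a p c m : ℝ) : ℝ := (r₂ + m * vstar r₀ r₂ K d a p c m) / c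

/-- Linearization coefficient a₁₂. -/
noncomputable def a12 (r₀ r₂ K d a p c m : ℝ) : ℝ :=
  -K*r₀*ustar r₀ r₂ K d a p c m / (1 + K*vstar r₀ r₂ K d a p c m)^2 - p*ustar r₀ r₂ K d a p c m

/-- Linearization coefficient a₂₁. -/
noncomputable def a21 (r₀ r₂ K d a p c m : ℝ) : ℝ := c * vstar r₀ r₂ K d a p c m

/-- Linearization coefficient a₂₂. -/
noncomputable def a22 (r₀ r₂ K d a p c m : ℝ) : ℝ := -m * vstar r₀ r₂ K d a p c m

/-- Linearization coefficient b₁₁. -/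
noncomputable def b11 (r₀ r₂ K d a p c m : ℝ) : ℝ := -a * ustar r₀ r₂ K d a p c m

/-- A_k = (d₁ + d₂)·k²/l² − a₂₂. -/
noncomputable def Ak (r₀ r₂ K d a p c m d₁ d₂ l : ℝ) (k : ℕ) : ℝ :=
  (d₁ + d₂)*(k:ℝ)^2/l^2 - a22 r₀ r₂ K d a p c m

/-- B_k = d₁·d₂·k⁴/l⁴ − a₂₂·d₁·k²/l² − a₁₂·a₂₁. -/
noncomputable def Bk (r₀ r₂ K d a p c m d₁ d₂ l : ℝ) (k : ℕ) : ℝ :=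
  d₁*d₂*(k:ℝ)^4/l^4 - a22 r₀ r₂ K d a p c m * d₁*(k:ℝ)^2/l^2 - a12 r₀ r₂ K d a p c m * a21 r₀ r₂ K d a p c m

/-- C_k = −b₁₁·d₂·k²/l² + a₂₂·b₁₁. -/
noncomputable def Ck (r₀ r₂ K d a p c m d₁ d₂ l : ℝ) (k : ℕ) : ℝ :=
  -(b11 r₀ r₂ K d a p c m)*d₂*(k:ℝ)^2/l^2 + a22 r₀ r₂ K d a p c m * b11 r₀ r₂ K d a p c m

/-- The characteristic equation at mode k with delay τ:
λ² + A_k·λ + B_k + (−b₁₁·λ + C_k)·exp(−λτ) = 0. -/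
def charEq (r₀ r₂ K d a p c m d₁ d₂ l : ℝ) (k : ℕ) (τ : ℝ) (z : ℂ) : Prop :=
  z^2 + (Ak r₀ r₂ K d a p c m d₁ d₂ l k : ℂ)*z + (Bk r₀ r₂ K d a p c m d₁ d₂ l k : ℂ)
    + (-(b11 r₀ r₂ K d a p c m : ℂ)*z + (Ck r₀ r₂ K d a p c m d₁ d₂ l k : ℂ)) * Complex.exp (-z*(τ:ℂ)) = 0


lemma aux_b2_lt_A2 (A B C b : ℝ) (hB : 0 < B) (hC : 0 < C)
    (h2 : (A^2 - 2*B - b^2)^2 < 4*(B^2 - C^2)) : b^2 < A^2 := by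
  by_contra hle
  push_neg at hle
  have h3 : A^2 - 2*B - b^2 ≤ -2*B := by linarith
  have h4 : 4*B^2 ≤ (A^2 - 2*B - b^2)^2 := by nlinarith [sq_nonneg (A^2 - 2*B - b^2 + 2*B)]
  nlinarith [sq_nonneg C]

lemma aux_quad2 (u r p' Q E : ℝ) (hu : 0 ≤ u) (hr : 0 ≤ r) (hQ : E ≤ Q) (hE : p'^2 < 4*E) :
    0 < u^2 + (2*r + p')*u + Q := by
  rcases le_or_gt 0 (2*r + p') with hs | hs
  · nlinarith [sq_nonneg u, mul_nonneg hs hu, sq_nonneg p']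
  · have hsp : (2*r + p')^2 ≤ p'^2 := by
      nlinarith [mul_nonneg hr (by linarith : (0:ℝ) ≤ -(r + p'))]
    nlinarith [sq_nonneg (2*u + 2*r + p')]

lemma aux_main (A B C b x u : ℝ) (hA : 0 < A) (hB : 0 < B) (hC : 0 < C) (hb : b < 0)
    (hx : 0 ≤ x) (hu : 0 ≤ u)
    (h : (-A^2 + 2*B + b^2 < 0 ∧ B - C > 0) ∨ (A^2 - 2*B - b^2)^2 < 4*(B^2 - C^2)) :
    0 < u^2 + (2*(x^2 + A*x) + (A^2 - 2*B - b^2))*u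
        + (((x^2 + A*x) + B)^2 - (C - b*x)^2) := by
  have hr0 : 0 ≤ x^2 + A*x := by nlinarith [sq_nonneg x, mul_nonneg hA.le hx]
  rcases h with ⟨h1, h2⟩ | h2
  · have hp0 : 0 < A^2 - 2*B - b^2 := by linarith
    have hAb : 0 < A + b := by nlinarith
    have hf1 : 0 < x^2 + (A + b)*x + (B - C) := by nlinarith [mul_nonneg hAb.le hx, sq_nonneg x]
    have hf2 : 0 < x^2 + (A - b)*x + (B + C) := by
      nlinarith [mul_nonneg (by linarith : (0:ℝ) ≤ A - b) hx, sq_nonneg x]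
    have hQ : 0 < ((x^2 + A*x) + B)^2 - (C - b*x)^2 := by nlinarith [mul_pos hf1 hf2]
    nlinarith [sq_nonneg u, mul_nonneg (by linarith : (0:ℝ) ≤ 2*(x^2+A*x) + (A^2-2*B-b^2)) hu]
  · have hb2 : b^2 < A^2 := aux_b2_lt_A2 A B C b hB hC h2
    have hAb : 0 < A + b := by nlinarith
    have hbx0 : 0 ≤ (-b)*x := mul_nonneg (by linarith) hx
    have hrb : (-b)*x ≤ x^2 + A*x := by nlinarith [mul_nonneg hAb.le hx, sq_nonneg x]
    have hsq : ((-b)*x)^2 ≤ (x^2 + A*x)^2 := pow_le_pow_left₀ hbx0 hrb 2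
    have hBC : C < B := by nlinarith [sq_nonneg (A^2 - 2*B - b^2)]
    have hmul : ((-b)*x)*C ≤ (x^2 + A*x)*B := by
      calc ((-b)*x)*C ≤ (x^2 + A*x)*C := mul_le_mul_of_nonneg_right hrb hC.le
      _ ≤ (x^2 + A*x)*B := mul_le_mul_of_nonneg_left hBC.le hr0
    have hQ : B^2 - C^2 ≤ ((x^2 + A*x) + B)^2 - (C - b*x)^2 := by nlinarith [hsq, hmul]
    exact aux_quad2 u (x^2 + A*x) (A^2 - 2*B - b^2) _ _ hu hr0 hQ h2

lemma keyIneq (A B C b x y : ℝ) (hA : 0 < A) (hB : 0 < B) (hC : 0 < C) (hb : b < 0)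
    (hx : 0 ≤ x)
    (h : (-A^2 + 2*B + b^2 < 0 ∧ B - C > 0) ∨ (A^2 - 2*B - b^2)^2 < 4*(B^2 - C^2)) :
    (C - b*x)^2 + b^2*y^2 < (x^2 - y^2 + A*x + B)^2 + (2*x*y + A*y)^2 := by
  have hiden : (x^2 - y^2 + A*x + B)^2 + (2*x*y + A*y)^2 - ((C - b*x)^2 + b^2*y^2)
      = (y^2)^2 + (2*(x^2 + A*x) + (A^2 - 2*B - b^2))*(y^2)
        + (((x^2 + A*x) + B)^2 - (C - b*x)^2) := by ring
  have hgoal := aux_main A B C b x (y^2) hA hB hC hb hx (sq_nonneg y) h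
  linarith [hiden, hgoal]

lemma vstar_pos (r₀ r₂ K d a p c m : ℝ) (hr₂ : 0 < r₂) (hK : 0 < K)
    (hd : 0 < d) (ha : 0 < a) (hp : 0 < p) (hc : 0 < c) (hm : 0 < m)
    (hH0 : a*r₂ + c*d - c*r₀ < 0) : 0 < vstar r₀ r₂ K d a p c m := by
  have hden : 0 < 2*K*(a*m + c*p) := by positivity
  have hM : 0 < a*m + c*p + K*(a*r₂ + c*d) := by positivity
  have hΔ : (a*m + c*p + K*(a*r₂ + c*d))^2 < Delta r₀ r₂ K d a p c m := by
    unfold Delta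
    nlinarith [mul_pos (mul_pos hK (by positivity : (0:ℝ) < a*m + c*p))
      (by linarith : (0:ℝ) < -(a*r₂ + c*d - c*r₀))]
  have hsq : a*m + c*p + K*(a*r₂ + c*d) < Real.sqrt (Delta r₀ r₂ K d a p c m) :=
    (Real.lt_sqrt hM.le).mpr hΔ
  unfold vstar
  exact div_pos (by linarith) hden

lemma ustar_pos (r₀ r₂ K d a p c m : ℝ) (hr₂ : 0 < r₂) (hK : 0 < K)
    (hd : 0 < d) (ha : 0 < a) (hp : 0 < p) (hc : 0 < c) (hm : 0 < m)
    (hH0 : a*r₂ + c*d - c*r₀ < 0) : 0 < ustar r₀ r₂ K d a p c m := by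
  have hv := vstar_pos r₀ r₂ K d a p c m hr₂ hK hd ha hp hc hm hH0
  exact div_pos (by nlinarith) hc

theorem stmt18 (r₀ r₂ K d a p c m d₁ d₂ l : ℝ) (hr₀ : 0 < r₀) (hr₂ : 0 < r₂) (hK : 0 < K) (hd : 0 < d) (ha : 0 < a) (hp : 0 < p) (hc : 0 < c) (hm : 0 < m)
    (hd₁ : 0 < d₁) (hd₂ : 0 < d₂) (hl : 0 < l)
    (hH0 : a*r₂ + c*d - c*r₀ < 0)
    (hH1 : ∀ k : ℕ,
      (-(Ak r₀ r₂ K d a p c m d₁ d₂ l k)^2 + 2*Bk r₀ r₂ K d a p c m d₁ d₂ l k + (b11 r₀ r₂ K d a p c m)^2 < 0 ∧ Bk r₀ r₂ K d a p c m d₁ d₂ l k - Ck r₀ r₂ K d a p c m d₁ d₂ l k > 0) ∨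
      ((Ak r₀ r₂ K d a p c m d₁ d₂ l k)^2 - 2*Bk r₀ r₂ K d a p c m d₁ d₂ l k - (b11 r₀ r₂ K d a p c m)^2)^2 < 4*((Bk r₀ r₂ K d a p c m d₁ d₂ l k)^2 - (Ck r₀ r₂ K d a p c m d₁ d₂ l k)^2)) :
    ∀ (k : ℕ) (τ : ℝ), 0 ≤ τ → ∀ z : ℂ, charEq r₀ r₂ K d a p c m d₁ d₂ l k τ z → z.re < 0 := by
  have hv := vstar_pos r₀ r₂ K d a p c m hr₂ hK hd ha hp hc hm hH0
  have hu := ustar_pos r₀ r₂ K d a p c m hr₂ hK hd ha hp hc hm hH0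
  have ha22 : a22 r₀ r₂ K d a p c m < 0 := by unfold a22; nlinarith
  have hb11 : b11 r₀ r₂ K d a p c m < 0 := by unfold b11; nlinarith
  have ha21 : 0 < a21 r₀ r₂ K d a p c m := mul_pos hc hv
  have ha12 : a12 r₀ r₂ K d a p c m < 0 := by
    unfold a12
    have h1 : 0 < K*r₀*ustar r₀ r₂ K d a p c m / (1 + K*vstar r₀ r₂ K d a p c m)^2 :=
      div_pos (mul_pos (mul_pos hK hr₀) hu) (pow_pos (by nlinarith) 2)
    have h2 : 0 < p * ustar r₀ r₂ K d a p c m := mul_pos hp hu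
    have h3 : -K*r₀*ustar r₀ r₂ K d a p c m / (1 + K*vstar r₀ r₂ K d a p c m)^2
        = -(K*r₀*ustar r₀ r₂ K d a p c m / (1 + K*vstar r₀ r₂ K d a p c m)^2) := by ring
    rw [h3]; linarith
  intro k τ hτ z hz
  have hkl : 0 ≤ (k:ℝ)^2/l^2 := by positivity
  have hkl4 : 0 ≤ (k:ℝ)^4/l^4 := by positivity
  have hA : 0 < Ak r₀ r₂ K d a p c m d₁ d₂ l k := by
    unfold Ak
    have h1 : (d₁ + d₂)*(k:ℝ)^2/l^2 = (d₁ + d₂)*((k:ℝ)^2/l^2) := by ring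
    have h2 : 0 ≤ (d₁ + d₂)*((k:ℝ)^2/l^2) := mul_nonneg (by linarith) hkl
    rw [h1]; linarith
  have hB : 0 < Bk r₀ r₂ K d a p c m d₁ d₂ l k := by
    unfold Bk
    have h1 : d₁*d₂*(k:ℝ)^4/l^4 = (d₁*d₂)*((k:ℝ)^4/l^4) := by ring
    have h2 : 0 ≤ (d₁*d₂)*((k:ℝ)^4/l^4) := mul_nonneg (mul_nonneg hd₁.le hd₂.le) hkl4
    have h3 : a22 r₀ r₂ K d a p c m * d₁*(k:ℝ)^2/l^2
        = a22 r₀ r₂ K d a p c m * (d₁*((k:ℝ)^2/l^2)) := by ring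
    have h4 : a22 r₀ r₂ K d a p c m * (d₁*((k:ℝ)^2/l^2)) ≤ 0 :=
      mul_nonpos_of_nonpos_of_nonneg ha22.le (mul_nonneg hd₁.le hkl)
    have h5 : a12 r₀ r₂ K d a p c m * a21 r₀ r₂ K d a p c m < 0 :=
      mul_neg_of_neg_of_pos ha12 ha21
    rw [h1, h3]; linarith
  have hC : 0 < Ck r₀ r₂ K d a p c m d₁ d₂ l k := by
    unfold Ck
    have h1 : -(b11 r₀ r₂ K d a p c m)*d₂*(k:ℝ)^2/l^2
        = -(b11 r₀ r₂ K d a p c m)*(d₂*((k:ℝ)^2/l^2)) := by ring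
    have h2 : 0 ≤ -(b11 r₀ r₂ K d a p c m)*(d₂*((k:ℝ)^2/l^2)) :=
      mul_nonneg (by linarith) (mul_nonneg hd₂.le hkl)
    have h3 : 0 < a22 r₀ r₂ K d a p c m * b11 r₀ r₂ K d a p c m :=
      mul_pos_of_neg_of_neg ha22 hb11
    rw [h1]; linarith
  by_contra hcon
  push_neg at hcon
  unfold charEq at hz
  set A := Ak r₀ r₂ K d a p c m d₁ d₂ l k with hA'
  set B := Bk r₀ r₂ K d a p c m d₁ d₂ l k with hB'
  set C := Ck r₀ r₂ K d a p c m d₁ d₂ l k with hC'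
  set b := b11 r₀ r₂ K d a p c m with hb'
  have h1 : z^2 + (A:ℂ)*z + (B:ℂ) = -((-(b:ℂ)*z + (C:ℂ)) * Complex.exp (-z*(τ:ℂ))) := by
    linear_combination hz
  have habs : ‖z^2 + (A:ℂ)*z + (B:ℂ)‖
      = ‖-(b:ℂ)*z + (C:ℂ)‖ * Real.exp ((-z*(τ:ℂ)).re) := by
    rw [h1, norm_neg, norm_mul, Complex.norm_exp]
  have hretau : (-z*(τ:ℂ)).re = -(z.re*τ) := by
    simp [Complex.neg_re, Complex.mul_re]
  have hexp1 : Real.exp ((-z*(τ:ℂ)).re) ≤ 1 := by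
    rw [hretau]
    exact Real.exp_le_one_iff.mpr (by nlinarith)
  have hle : ‖z^2 + (A:ℂ)*z + (B:ℂ)‖ ≤ ‖-(b:ℂ)*z + (C:ℂ)‖ := by
    rw [habs]; exact mul_le_of_le_one_right (norm_nonneg _) hexp1
  have hsq : Complex.normSq (z^2 + (A:ℂ)*z + (B:ℂ)) ≤ Complex.normSq (-(b:ℂ)*z + (C:ℂ)) := by
    have h2 := pow_le_pow_left₀ (norm_nonneg _) hle 2
    rwa [Complex.sq_norm, Complex.sq_norm] at h2
  have e1 : Complex.normSq (z^2 + (A:ℂ)*z + (B:ℂ))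
      = (z.re^2 - z.im^2 + A*z.re + B)^2 + (2*z.re*z.im + A*z.im)^2 := by
    simp [Complex.normSq_apply, Complex.add_re, Complex.add_im, Complex.mul_re, Complex.mul_im,
      pow_two]
    ring
  have e2 : Complex.normSq (-(b:ℂ)*z + (C:ℂ)) = (C - b*z.re)^2 + b^2*z.im^2 := by
    simp [Complex.normSq_apply, Complex.add_re, Complex.add_im, Complex.mul_re, Complex.mul_im,
      pow_two]
    ring
  have hkey := keyIneq A B C b z.re z.im hA hB hC hb11 hcon (hH1 k)
  linarith [hsq, e1, e2, hkey]
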